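/- arXiv:1202.1964 — 4 statements merged into one kernel-verified Lean document; each statement's English description precedes it below -/
import Mathlib

section
/- Let H be a real symmetric idempotent n×n matrix and G = I − H. For indices i ≠ j, the rows i and j of G are equal if and only if H_ii = H_jj = H_ij + 1. -/
theorem rows_of_complement_eq_iff (n : ℕ) (H : Matrix (Fin n) (Fin n) ℝ)
    (hsymm : H.transpose = H) (hidem : H * H = H) (i j : Fin n) (hij : i ≠ j) :
    (∀ k, (1 - H) i k = (1 - H) j k) ↔ (H i i = H j j ∧ H j j = H i j + 1) := by
  have hH : ∀ a b, H a b = H b a := by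
    intro a b
    conv_lhs => rw [← hsymm]
    rfl
  constructor
  · intro h
    have h1 := h i
    have h2 := h j
    simp only [Matrix.sub_apply, Matrix.one_apply_eq, Matrix.one_apply_ne hij,
      Matrix.one_apply_ne (Ne.symm hij)] at h1 h2
    have hji : H j i = H i j := hH j i
    constructor <;> linarith
  · rintro ⟨h1, h2⟩ k
    set G : Matrix (Fin n) (Fin n) ℝ := 1 - H with hGdef
    have hGmul : G * G = G := by
      rw [hGdef]
      rw [sub_mul, mul_sub, mul_sub, hidem, one_mul, one_mul, mul_one]
      abel
    have hGsym : ∀ a b, G a b = G b a := by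
      intro a b
      simp only [hGdef, Matrix.sub_apply, Matrix.one_apply, hH a b, eq_comm]
    have e1 : ∑ l, G i l * G l i = G i i := by rw [← Matrix.mul_apply, hGmul]
    have e2 : ∑ l, G i l * G l j = G i j := by rw [← Matrix.mul_apply, hGmul]
    have e3 : ∑ l, G j l * G l j = G j j := by rw [← Matrix.mul_apply, hGmul]
    have hsum : ∑ l, (G i l - G j l) ^ 2 = 0 := by
      have expand : ∑ l, (G i l - G j l) ^ 2
          = ∑ l, G i l * G l i - 2 * ∑ l, G i l * G l j + ∑ l, G j l * G l j := by
        rw [Finset.mul_sum, ← Finset.sum_sub_distrib, ← Finset.sum_add_distrib]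
        apply Finset.sum_congr rfl
        intro l _
        rw [hGsym l i, hGsym l j]
        ring
      rw [expand, e1, e2, e3]
      have gii : G i i = 1 - H i i := by
        simp [hGdef, Matrix.sub_apply, Matrix.one_apply_eq]
      have gij : G i j = -H i j := by
        simp [hGdef, Matrix.sub_apply, Matrix.one_apply_ne hij]
      have gjj : G j j = 1 - H j j := by
        simp [hGdef, Matrix.sub_apply, Matrix.one_apply_eq]
      rw [gii, gij, gjj]
      linarith
    have hk : (G i k - G j k) ^ 2 = 0 := by
      have := (Finset.sum_eq_zero_iff_of_nonneg (fun l _ => sq_nonneg (G i l - G j l))).mp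
        hsum k (Finset.mem_univ k)
      exact this
    have := sub_eq_zero.mp (pow_eq_zero_iff (by norm_num) |>.mp hk)
    simpa [hGdef] using this
end

section
/- Let ε be a random vector in ℝⁿ with i.i.d. standard Gaussian components, H a real symmetric idempotent n×n matrix with, for all i < j, not (H_ii = H_jj = H_ij + 1), and ε̂ = (I − H)ε. Then almost surely the components ε̂_1, …, ε̂_n are pairwise distinct. -/
open MeasureTheory ProbabilityTheory

open scoped NNReal
open Real in
lemma gaussianPDF_le_one (x : ℝ) : gaussianPDF 0 1 x ≤ 1 := by
  rw [gaussianPDF, ← ENNReal.ofReal_one]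
  apply ENNReal.ofReal_le_ofReal
  rw [gaussianPDFReal]
  have h1 : (1:ℝ) ≤ √(2 * π * (1:ℝ≥0)) := by
    rw [show ((1:ℝ≥0):ℝ) = (1:ℝ) by norm_num, mul_one]
    rw [show (1:ℝ) = √1 by simp]
    apply Real.sqrt_le_sqrt
    nlinarith [Real.pi_gt_three]
  have h2 : rexp (-(x - 0) ^ 2 / (2 * (1:ℝ≥0))) ≤ 1 := by
    apply Real.exp_le_one_iff.2
    have : (0:ℝ) ≤ (x - 0)^2 := sq_nonneg _
    have h3 : (0:ℝ) < 2 * (1:ℝ≥0) := by norm_num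
    apply div_nonpos_of_nonpos_of_nonneg <;> nlinarith
  calc (√(2 * π * (1:ℝ≥0)))⁻¹ * rexp (-(x - 0) ^ 2 / (2 * (1:ℝ≥0)))
      ≤ 1 * 1 := by
        apply mul_le_mul _ h2 (Real.exp_nonneg _) zero_le_one
        rw [inv_le_one_iff₀]; right; exact h1
    _ = 1 := by norm_num

lemma gaussianReal_le_volume : gaussianReal 0 1 ≤ volume := by
  rw [gaussianReal_of_var_ne_zero 0 one_ne_zero]
  calc volume.withDensity (gaussianPDF 0 1)
      ≤ volume.withDensity 1 :=
        withDensity_mono (Filter.Eventually.of_forall fun x => gaussianPDF_le_one x)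
    _ = volume := withDensity_one

lemma outerMeasure_pi_mono {ι : Type*} [Fintype ι] {α : ι → Type*}
    (m₁ m₂ : ∀ i, OuterMeasure (α i)) (h : ∀ i, m₁ i ≤ m₂ i) :
    OuterMeasure.pi m₁ ≤ OuterMeasure.pi m₂ := by
  intro s
  rw [OuterMeasure.pi, OuterMeasure.pi, OuterMeasure.boundedBy_apply,
    OuterMeasure.boundedBy_apply]
  refine iInf_mono fun t => iInf_mono fun ht => ENNReal.tsum_le_tsum fun n => ?_
  refine iSup_mono fun hn => ?_
  exact Finset.prod_le_prod (fun i _ => zero_le) fun i _ => h i _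

lemma measure_pi_mono_of_le {ι : Type*} [Fintype ι] {ν μ : ι → Measure ℝ}
    [∀ i, SigmaFinite (ν i)] [∀ i, SigmaFinite (μ i)]
    (h : ∀ i, ν i ≤ μ i) {s : Set (ι → ℝ)} (hs : MeasurableSet s) :
    Measure.pi ν s ≤ Measure.pi μ s := by
  rw [Measure.pi, Measure.pi, toMeasure_apply _ _ hs, toMeasure_apply _ _ hs]
  exact outerMeasure_pi_mono _ _ (fun i => fun t => h i t) s

lemma measure_pi_ac {ι : Type*} [Fintype ι] {ν μ : ι → Measure ℝ}
    [∀ i, SigmaFinite (ν i)] [∀ i, SigmaFinite (μ i)]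
    (h : ∀ i, ν i ≤ μ i) : Measure.pi ν ≪ Measure.pi μ := by
  intro s hs
  obtain ⟨t, hst, htm, ht⟩ := exists_measurable_superset_of_null hs
  refine measure_mono_null hst (le_antisymm ?_ zero_le)
  calc Measure.pi ν t ≤ Measure.pi μ t := measure_pi_mono_of_le h htm
    _ = 0 := ht

theorem residuals_pairwise_distinct_ae (n : ℕ) (H : Matrix (Fin n) (Fin n) ℝ)
    (hsymm : H.transpose = H) (hidem : H * H = H)
    (hH : ∀ i j : Fin n, i < j → ¬(H i i = H j j ∧ H j j = H i j + 1)) :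
    ∀ᵐ ε ∂(Measure.pi fun _ : Fin n => gaussianReal 0 1),
      ∀ i j : Fin n, i ≠ j → (1 - H).mulVec ε i ≠ (1 - H).mulVec ε j := by
  have hac : (Measure.pi fun _ : Fin n => gaussianReal 0 1) ≪
      (Measure.pi fun _ : Fin n => (volume : Measure ℝ)) :=
    measure_pi_ac fun _ => gaussianReal_le_volume
  have hvol : (Measure.pi fun _ : Fin n => (volume : Measure ℝ)) =
      (volume : Measure (Fin n → ℝ)) := (MeasureTheory.volume_pi).symm
  -- key: for each pair i ≠ j, the bad set is null
  have key : ∀ i j : Fin n, i ≠ j →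
      ∀ᵐ ε ∂(Measure.pi fun _ : Fin n => gaussianReal 0 1),
        (1 - H).mulVec ε i ≠ (1 - H).mulVec ε j := by
    intro i j hij
    set a : Fin n → ℝ := fun k => (1 - H) i k - (1 - H) j k with ha
    have hA : ∃ k, a k ≠ 0 := by
      by_contra hcon
      push_neg at hcon
      have hz : ∀ k, (1 - H) i k = (1 - H) j k := by
        intro k
        have := hcon k
        simpa [ha, sub_eq_zero] using this
      have h1 : (1 - H) i i = (1 - H) j i := hz i
      have h2 : (1 - H) i j = (1 - H) j j := hz j
      have e1 : (1 - H) i i = 1 - H i i := by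
        simp [Matrix.sub_apply, Matrix.one_apply]
      have e2 : (1 - H) j i = -H j i := by
        simp [Matrix.sub_apply, Matrix.one_apply, hij.symm]
      have e3 : (1 - H) i j = -H i j := by
        simp [Matrix.sub_apply, Matrix.one_apply, hij]
      have e4 : (1 - H) j j = 1 - H j j := by
        simp [Matrix.sub_apply, Matrix.one_apply]
      have hsym : H i j = H j i := by
        conv_lhs => rw [← hsymm]
        rfl
      have hii : H i i = H i j + 1 := by
        rw [e1, e2] at h1; rw [hsym]; linarith
      have hjj : H j j = H i j + 1 := by
        rw [e3, e4] at h2; linarith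
      rcases lt_or_gt_of_ne hij with h | h
      · exact hH i j h ⟨by rw [hii, hjj], hjj⟩
      · exact hH j i h ⟨by rw [hii, hjj], by rw [hii, hsym]⟩
    obtain ⟨k₀, hk₀⟩ := hA
    -- the linear functional
    let f : (Fin n → ℝ) →ₗ[ℝ] ℝ :=
      { toFun := fun x => ∑ k, a k * x k
        map_add' := by
          intro x y
          simp [mul_add, Finset.sum_add_distrib]
        map_smul' := by
          intro c x
          simp [Finset.mul_sum]
          congr 1
          ext k
          ring }
    have hf : f ≠ 0 := by
      intro h0
      have : f (Pi.single k₀ 1) = 0 := by rw [h0]; rfl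
      rw [show f (Pi.single k₀ 1) = a k₀ by
        simp only [f, LinearMap.coe_mk, AddHom.coe_mk]
        rw [Finset.sum_eq_single k₀]
        · simp
        · intro b _ hb; simp [Pi.single_eq_of_ne hb]
        · simp] at this
      exact hk₀ this
    have hker : LinearMap.ker f ≠ ⊤ := by
      rw [Ne, LinearMap.ker_eq_top]
      exact hf
    have hnull : (volume : Measure (Fin n → ℝ)) (LinearMap.ker f : Set (Fin n → ℝ)) = 0 :=
      Measure.addHaar_submodule _ _ hker
    have hsub : {ε : Fin n → ℝ | ¬((1 - H).mulVec ε i ≠ (1 - H).mulVec ε j)} ⊆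
        (LinearMap.ker f : Set (Fin n → ℝ)) := by
      intro ε hε
      simp only [Set.mem_setOf_eq, not_not] at hε
      simp only [SetLike.mem_coe, LinearMap.mem_ker]
      show ∑ k, a k * ε k = 0
      have : ∑ k, ((1 - H) i k - (1 - H) j k) * ε k =
          (1 - H).mulVec ε i - (1 - H).mulVec ε j := by
        simp [Matrix.mulVec, dotProduct, sub_mul, Finset.sum_sub_distrib]
      rw [show (fun k => a k * ε k) = fun k => ((1 - H) i k - (1 - H) j k) * ε k from rfl,
        this, hε, sub_self]
    rw [ae_iff]
    refine measure_mono_null hsub ?_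
    apply hac
    rw [hvol]
    exact hnull
  rw [ae_all_iff]
  intro i
  rw [ae_all_iff]
  intro j
  by_cases hij : i = j
  · exact Filter.Eventually.of_forall fun ε h => absurd hij h
  · exact (key i j hij).mono fun ε h _ => h
end

section
/- For all x, y ∈ [−1, 1], |arcsin(x) − arcsin(y)| ≤ (π/√2)·√|x − y|. -/
open Real

lemma arcsin_holder_key {a b : ℝ} (ha1 : -(π/2) ≤ a) (ha2 : a ≤ π/2)
    (hb1 : -(π/2) ≤ b) (hb2 : b ≤ π/2) (hab : b ≤ a) :
    (a - b)^2 ≤ π^2/2 * (Real.sin a - Real.sin b) := by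
  have hpi := Real.pi_pos
  set s := (a - b)/2 with hs_def
  set t := (a + b)/2 with ht_def
  have hs0 : 0 ≤ s := by simp [hs_def]; linarith
  have hs1 : s ≤ π/2 := by simp [hs_def]; linarith
  have ht : |t| ≤ π/2 - s := by
    rw [abs_le]; constructor <;> simp [ht_def, hs_def] <;> linarith
  have hcos : Real.sin s ≤ Real.cos t := by
    have h1 : Real.cos (π/2 - s) ≤ Real.cos |t| :=
      Real.cos_le_cos_of_nonneg_of_le_pi (abs_nonneg t) (by linarith) ht
    rwa [Real.cos_pi_div_two_sub, Real.cos_abs] at h1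
  have hsin : 2/π * s ≤ Real.sin s := Real.mul_le_sin hs0 hs1
  have hdiff : Real.sin a - Real.sin b = 2 * Real.sin s * Real.cos t := by
    rw [Real.sin_sub_sin]
  have hsin0 : 0 ≤ Real.sin s := le_trans (by positivity) hsin
  have habs : a - b = 2 * s := by rw [hs_def]; ring
  rw [hdiff, habs]
  have h2 : (2/π*s)*(2/π*s) ≤ Real.sin s * Real.sin s :=
    mul_le_mul hsin hsin (by positivity) hsin0
  have h3 : Real.sin s * Real.sin s ≤ Real.sin s * Real.cos t :=
    mul_le_mul_of_nonneg_left hcos hsin0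
  have hπ2 : π^2 > 0 := by positivity
  have h4 : π^2 * (2/π * s * (2/π * s)) = 4 * s^2 := by
    field_simp; ring
  nlinarith [mul_le_mul_of_nonneg_left (h2.trans h3) (le_of_lt hπ2), h4]

theorem arcsin_holder (x y : ℝ) (hx : x ∈ Set.Icc (-1 : ℝ) 1) (hy : y ∈ Set.Icc (-1 : ℝ) 1) :
    |Real.arcsin x - Real.arcsin y| ≤ (Real.pi / Real.sqrt 2) * Real.sqrt |x - y| := by
  have hpi := Real.pi_pos
  set a := Real.arcsin x with ha_def
  set b := Real.arcsin y with hb_def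
  have ha1 : -(π/2) ≤ a := Real.neg_pi_div_two_le_arcsin x
  have ha2 : a ≤ π/2 := Real.arcsin_le_pi_div_two x
  have hb1 : -(π/2) ≤ b := Real.neg_pi_div_two_le_arcsin y
  have hb2 : b ≤ π/2 := Real.arcsin_le_pi_div_two y
  have hsa : Real.sin a = x := Real.sin_arcsin hx.1 hx.2
  have hsb : Real.sin b = y := Real.sin_arcsin hy.1 hy.2
  have key : (a - b)^2 ≤ π^2/2 * |x - y| := by
    rcases le_total b a with h | h
    · calc (a-b)^2 ≤ π^2/2 * (Real.sin a - Real.sin b) :=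
            arcsin_holder_key ha1 ha2 hb1 hb2 h
        _ ≤ π^2/2 * |x - y| := by
            rw [hsa, hsb]; gcongr; exact le_abs_self _
    · calc (a-b)^2 = (b-a)^2 := by ring
        _ ≤ π^2/2 * (Real.sin b - Real.sin a) :=
            arcsin_holder_key hb1 hb2 ha1 ha2 h
        _ ≤ π^2/2 * |x - y| := by
            rw [hsa, hsb]; gcongr; rw [abs_sub_comm]; exact le_abs_self _
  have h1 : |a - b| ≤ Real.sqrt (π^2/2 * |x - y|) := Real.abs_le_sqrt key
  calc |a - b| ≤ Real.sqrt (π^2/2 * |x - y|) := h1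
    _ = (π / Real.sqrt 2) * Real.sqrt |x - y| := by
        rw [Real.sqrt_mul (by positivity), Real.sqrt_div (by positivity : (0:ℝ) ≤ π^2),
          Real.sqrt_sq hpi.le]
end

section
/- Let ε₁, …, ε_n be independent random variables each with a continuous (atomless) distribution, H a real symmetric idempotent n×n matrix, and ε̂ = (I − H)ε. For indices i ≠ j, the probability that ε̂_i = ε̂_j equals 1 if H_ii = H_jj = H_ij + 1, and equals 0 otherwise. -/
open MeasureTheory ProbabilityTheory

/-- If `X` and `Y` are independent and the law of `Y` has no atoms, then `X + Y = 0`
has probability zero. -/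
lemma indep_add_eq_zero_prob_zero {Ω : Type*} [MeasureSpace Ω]
    [IsProbabilityMeasure (ℙ : Measure Ω)]
    {X Y : Ω → ℝ} (hX : Measurable X) (hY : Measurable Y)
    (hind : IndepFun X Y ℙ) (hatom : ∀ x : ℝ, Measure.map Y ℙ {x} = 0) :
    ℙ {ω | X ω + Y ω = 0} = 0 := by
  have hmap : Measure.map (fun ω => (X ω, Y ω)) ℙ
      = (Measure.map X ℙ).prod (Measure.map Y ℙ) :=
    (indepFun_iff_map_prod_eq_prod_map_map hX.aemeasurable hY.aemeasurable).1 hind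
  have hmeasset : MeasurableSet {p : ℝ × ℝ | p.1 + p.2 = 0} :=
    measurableSet_eq_fun (measurable_fst.add measurable_snd) measurable_const
  have hset : {ω | X ω + Y ω = 0}
      = (fun ω => (X ω, Y ω)) ⁻¹' {p : ℝ × ℝ | p.1 + p.2 = 0} := rfl
  rw [hset, ← Measure.map_apply (hX.prodMk hY) hmeasset, hmap,
    Measure.prod_apply hmeasset]
  have hslice : ∀ x : ℝ,
      (Measure.map Y ℙ) (Prod.mk x ⁻¹' {p : ℝ × ℝ | p.1 + p.2 = 0}) = 0 := by
    intro x
    have : (Prod.mk x ⁻¹' {p : ℝ × ℝ | p.1 + p.2 = 0}) = {-x} := by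
      ext y
      simp only [Set.mem_preimage, Set.mem_setOf_eq, Set.mem_singleton_iff]
      constructor
      · intro h; linarith
      · intro h; linarith
    rw [this]
    exact hatom (-x)
  simp only [hslice, lintegral_zero]

theorem prob_residuals_equal
    {Ω : Type*} [MeasureSpace Ω] [IsProbabilityMeasure (ℙ : Measure Ω)]
    (n : ℕ) (ε : Fin n → Ω → ℝ) (hmeas : ∀ k, Measurable (ε k))
    (hindep : iIndepFun ε ℙ)
    (hcont : ∀ k, ∀ x : ℝ, Measure.map (ε k) ℙ {x} = 0)
    (H : Matrix (Fin n) (Fin n) ℝ) (hsymm : H.transpose = H) (hidem : H * H = H)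
    (i j : Fin n) (hij : i ≠ j) :
    ((H i i = H j j ∧ H j j = H i j + 1) →
      ℙ {ω | (1 - H).mulVec (fun k => ε k ω) i = (1 - H).mulVec (fun k => ε k ω) j} = 1) ∧
    (¬(H i i = H j j ∧ H j j = H i j + 1) →
      ℙ {ω | (1 - H).mulVec (fun k => ε k ω) i = (1 - H).mulVec (fun k => ε k ω) j} = 0) := by
  set M : Matrix (Fin n) (Fin n) ℝ := 1 - H with hM
  have hMsymm : M.transpose = M := by
    rw [hM, Matrix.transpose_sub, Matrix.transpose_one, hsymm]
  have hMidem : M * M = M := by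
    rw [hM]
    simp [Matrix.sub_mul, Matrix.mul_sub, hidem]
  set c : Fin n → ℝ := fun k => M i k - M j k with hc
  -- sum of squares of c
  have hsumsq : ∑ k, c k ^ 2 = M i i - 2 * M i j + M j j := by
    have h1 : ∀ a b : Fin n, ∑ k, M a k * M b k = M a b := by
      intro a b
      have : ∑ k, M a k * M b k = (M * M.transpose) a b := by
        rw [Matrix.mul_apply]
        simp [Matrix.transpose_apply]
      rw [this, hMsymm, hMidem]
    have expand : ∀ k, c k ^ 2 = M i k * M i k - 2 * (M i k * M j k) + M j k * M j k := by
      intro k; rw [hc]; ring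
    calc ∑ k, c k ^ 2
        = ∑ k, (M i k * M i k - 2 * (M i k * M j k) + M j k * M j k) := by
          exact Finset.sum_congr rfl fun k _ => expand k
      _ = (∑ k, M i k * M i k) - 2 * (∑ k, M i k * M j k) + ∑ k, M j k * M j k := by
          rw [Finset.sum_add_distrib, Finset.sum_sub_distrib, Finset.mul_sum]
      _ = M i i - 2 * M i j + M j j := by rw [h1 i i, h1 i j, h1 j j]
  have hMii : M i i = 1 - H i i := by simp [hM, Matrix.sub_apply, Matrix.one_apply]
  have hMjj : M j j = 1 - H j j := by simp [hM, Matrix.sub_apply, Matrix.one_apply]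
  have hMij : M i j = - H i j := by simp [hM, Matrix.sub_apply, Matrix.one_apply_ne hij]
  have hMji : M j i = - H j i := by simp [hM, Matrix.sub_apply, Matrix.one_apply_ne hij.symm]
  have hHji : H j i = H i j := congrFun (congrFun hsymm i) j
  -- difference of residuals as a single sum
  have hdiff : ∀ ω, M.mulVec (fun k => ε k ω) i - M.mulVec (fun k => ε k ω) j
      = ∑ k, c k * ε k ω := by
    intro ω
    simp only [Matrix.mulVec, dotProduct, hc]
    rw [← Finset.sum_sub_distrib]
    exact Finset.sum_congr rfl fun k _ => by ring
  constructor
  · -- probability one case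
    rintro ⟨h1, h2⟩
    have hczero : ∀ k, c k = 0 := by
      have hsum0 : ∑ k, c k ^ 2 = 0 := by
        rw [hsumsq, hMii, hMjj, hMij, h1, h2]; ring
      intro k
      have h := (Finset.sum_eq_zero_iff_of_nonneg
        (fun k _ => sq_nonneg (c k))).1 hsum0 k (Finset.mem_univ k)
      exact (pow_eq_zero_iff two_ne_zero).mp h
    have : {ω | M.mulVec (fun k => ε k ω) i = M.mulVec (fun k => ε k ω) j} = Set.univ := by
      ext ω
      simp only [Set.mem_setOf_eq, Set.mem_univ, iff_true]
      have := hdiff ω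
      simp only [hczero, zero_mul, Finset.sum_const_zero] at this
      linarith
    rw [this]
    simp
  · -- probability zero case
    intro hcond
    obtain ⟨k₀, hk₀⟩ : ∃ k, c k ≠ 0 := by
      by_contra hall
      push_neg at hall
      apply hcond
      have hci := hall i
      have hcj := hall j
      rw [hc] at hci hcj
      simp only [hMii, hMij, hMji, hMjj, hHji] at hci hcj
      constructor <;> linarith
    -- the scaled variables
    set f : Fin n → Ω → ℝ := fun k ω => c k * ε k ω with hf
    have hfmeas : ∀ k, Measurable (f k) := fun k => (hmeas k).const_mul (c k)
    have hfindep : iIndepFun f ℙ :=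
      hindep.comp (fun k x => c k * x) (fun k => measurable_const_mul (c k))
    have hind : IndepFun (∑ k ∈ Finset.univ.erase k₀, f k) (f k₀) ℙ :=
      hfindep.indepFun_finsetSum_of_notMem hfmeas (Finset.notMem_erase k₀ _)
    have hatom : ∀ x : ℝ, Measure.map (f k₀) ℙ {x} = 0 := by
      intro x
      have hpre : f k₀ ⁻¹' {x} = ε k₀ ⁻¹' {x / c k₀} := by
        ext ω
        simp only [Set.mem_preimage, Set.mem_singleton_iff, hf]
        rw [eq_div_iff hk₀, mul_comm]
      rw [Measure.map_apply (hfmeas k₀) (measurableSet_singleton x), hpre,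
        ← Measure.map_apply (hmeas k₀) (measurableSet_singleton _)]
      exact hcont k₀ _
    have hind' : IndepFun (fun ω => ∑ k ∈ Finset.univ.erase k₀, f k ω) (f k₀) ℙ := by
      have : (fun ω => ∑ k ∈ Finset.univ.erase k₀, f k ω)
          = ∑ k ∈ Finset.univ.erase k₀, f k := by
        ext ω; simp [Finset.sum_apply]
      rw [this]; exact hind
    have hzero := indep_add_eq_zero_prob_zero
      (Finset.measurable_sum (Finset.univ.erase k₀) (fun k _ => hfmeas k)) (hfmeas k₀) hind' hatom
    have hseteq : {ω | M.mulVec (fun k => ε k ω) i = M.mulVec (fun k => ε k ω) j}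
        = {ω | (∑ k ∈ Finset.univ.erase k₀, f k ω) + f k₀ ω = 0} := by
      ext ω
      simp only [Set.mem_setOf_eq, Finset.sum_apply]
      have hsplit : (∑ k ∈ Finset.univ.erase k₀, f k ω) + f k₀ ω = ∑ k, f k ω :=
        Finset.sum_erase_add Finset.univ _ (Finset.mem_univ k₀)
      rw [hsplit]
      simp only [hf]
      rw [← hdiff ω]
      exact sub_eq_zero.symm
    rw [hseteq]
    exact hzero
end
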